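/- Let v(z) = a0 · z · (z - u1)^n · (z - conj(u1))^n with a0 > 0, n ≥ 1, Im(u1) > 0, and let τ = -2πi · Res(1/v, u1). Then Im(τ) = π / v'(0) = π / (a0 |u1|^{2n}). -/

import Mathlib

/-!
Write `1 / (X (X - u)^n (X - ū)^n) = c / X + P / (X - u)^n + Q / (X - ū)^n` with
`c = |u|^(-2n)` and `deg P, deg Q < n`. On a small circle around `u` the first two terms are
holomorphic, so `∮ 1/v = 2πi P_{n-1} / a0`. Conjugation maps the decomposition to another one
with `P` and `Q` swapped, so `Q = P̄` by uniqueness; comparing the coefficients of `X^(2n)` (this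
is the vanishing of the sum of the residues) gives `c + P_{n-1} + conj P_{n-1} = 0`, i.e.
`Re P_{n-1} = -c/2`. Hence `Im τ = -2π Re P_{n-1} / a0 = π c / a0`.
-/

open Polynomial Complex Metric ComplexConjugate Real

namespace Polynomial

section Field

variable {K : Type*} [Field K]

theorem natDegree_le_pred_of_degree_lt {p : K[X]} {n : ℕ} (hp : p.degree < n) :
    p.natDegree ≤ n - 1 := by
  rcases eq_or_ne p 0 with rfl | hp0
  · simp
  · have := (natDegree_lt_iff_degree_lt hp0).2 hp
    omega

theorem exists_eq_mul_add_mul_of_degree_lt {f g₁ g₂ : K[X]} (hg₁ : g₁.Monic) (hg₂ : g₂.Monic)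
    (hcop : IsCoprime g₁ g₂) (hf : f.degree < g₁.degree + g₂.degree) :
    ∃ r₁ r₂ : K[X], r₁.degree < g₁.degree ∧ r₂.degree < g₂.degree ∧ f = r₁ * g₂ + r₂ * g₁ := by
  obtain ⟨a, b, hab⟩ := hcop
  have hdiv := modByMonic_add_div (f * b) g₁
  set r₁ := f * b %ₘ g₁
  set r₂ := f * a + (f * b /ₘ g₁) * g₂
  have hr₁ : r₁.degree < g₁.degree := degree_modByMonic_lt _ hg₁
  have hf_eq : f = r₁ * g₂ + r₂ * g₁ := by linear_combination (-f) * hab - g₂ * hdiv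
  refine ⟨r₁, r₂, hr₁, ?_, hf_eq⟩
  have hr₂g₁ : (r₂ * g₁).degree < g₂.degree + g₁.degree := by
    rw [eq_sub_of_add_eq' hf_eq.symm, add_comm]
    refine (degree_sub_le _ _).trans_lt (max_lt hf ?_)
    rw [hg₂.degree_mul]
    exact WithBot.add_lt_add_right (degree_ne_bot.2 hg₂.ne_zero) hr₁
  rwa [hg₁.degree_mul, WithBot.add_lt_add_iff_right (degree_ne_bot.2 hg₁.ne_zero)] at hr₂g₁

theorem eq_of_mul_add_mul_eq_mul_add_mul {g₁ g₂ r₁ r₂ s₁ s₂ : K[X]} (hcop : IsCoprime g₁ g₂)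
    (hr₁ : r₁.degree < g₁.degree) (hs₁ : s₁.degree < g₁.degree)
    (h : r₁ * g₂ + r₂ * g₁ = s₁ * g₂ + s₂ * g₁) : r₁ = s₁ := by
  have hdvd : g₁ ∣ (r₁ - s₁) * g₂ := ⟨s₂ - r₂, by linear_combination h⟩
  exact sub_eq_zero.1 <| eq_zero_of_dvd_of_degree_lt (hcop.dvd_of_dvd_mul_right hdvd)
    ((degree_sub_le _ _).trans_lt (max_lt hr₁ hs₁))

theorem exists_partialFraction_X_mul_pow_mul_pow {u w : K} (hu : u ≠ 0) (hw : w ≠ 0)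
    (huw : u ≠ w) (n : ℕ) : ∃ P Q : K[X], P.degree < n ∧ Q.degree < n ∧
      1 = C ((u * w) ^ n)⁻¹ * ((X - C u) ^ n * (X - C w) ^ n)
        + P * (X * (X - C w) ^ n) + Q * (X * (X - C u) ^ n) := by
  have hmonic (a : K) : ((X - C a) ^ n).Monic := (monic_X_sub_C a).pow n
  have hcop {a b : K} (hab : a ≠ b) : IsCoprime (X - C a) (X - C b) :=
    isCoprime_X_sub_C_of_isUnit_sub (sub_ne_zero.2 hab).isUnit
  have hcopX : IsCoprime X ((X - C u) ^ n * (X - C w) ^ n) := by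
    simpa using (hcop hu.symm).pow_right.mul_right (hcop hw.symm).pow_right
  obtain ⟨r₀, r, hr₀, hr, h₁⟩ := exists_eq_mul_add_mul_of_degree_lt (f := 1) monic_X
    ((hmonic u).mul (hmonic w)) hcopX (by
      rw [degree_one, degree_X]
      exact add_pos_of_pos_of_nonneg zero_lt_one
        (zero_le_degree_iff.2 ((hmonic u).mul (hmonic w)).ne_zero))
  obtain ⟨P, Q, hP, hQ, h₂⟩ := exists_eq_mul_add_mul_of_degree_lt (hmonic u) (hmonic w)
    (hcop huw).pow (by rwa [← (hmonic w).degree_mul])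
  -- `r₀` is a constant, and evaluating at `0` identifies it.
  have hr₀ : r₀ = C ((u * w) ^ n)⁻¹ := by
    have h₀ := congrArg (eval 0) h₁
    simp only [eval_one, eval_add, eval_mul, eval_pow, eval_sub, eval_X, eval_C, zero_sub,
      mul_zero, add_zero, ← mul_pow, neg_mul_neg] at h₀
    rw [eq_C_of_degree_le_zero (p := r₀) (Nat.WithBot.lt_one_iff_le_zero.1 (by simpa using hr₀)),
      coeff_zero_eq_eval_zero, eq_inv_of_mul_eq_one_left h₀.symm]
  refine ⟨P, Q, by simpa using hP, by simpa using hQ, ?_⟩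
  rw [h₁, h₂, hr₀]
  ring

theorem add_coeff_pred_add_coeff_pred_eq_zero {u w c : K} {n : ℕ} (hn : n ≠ 0) {P Q : K[X]}
    (hP : P.degree < n) (hQ : Q.degree < n)
    (h : 1 = C c * ((X - C u) ^ n * (X - C w) ^ n)
        + P * (X * (X - C w) ^ n) + Q * (X * (X - C u) ^ n)) :
    c + P.coeff (n - 1) + Q.coeff (n - 1) = 0 := by
  have hleading (a : K) {p : K[X]} (hp : p.degree < n) :
      (p * (X * (X - C a) ^ n)).coeff (2 * n) = p.coeff (n - 1) := by
    have hmonic : (X * (X - C a) ^ n).Monic := monic_X.mul ((monic_X_sub_C a).pow n)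
    have hdeg : (X * (X - C a) ^ n).natDegree = n + 1 := by
      rw [natDegree_mul X_ne_zero (pow_ne_zero _ (X_sub_C_ne_zero a))]; simp; ring
    rw [show 2 * n = (n - 1) + (X * (X - C a) ^ n).natDegree by omega,
      coeff_mul_add_eq_of_natDegree_le (natDegree_le_pred_of_degree_lt hp) le_rfl,
      hmonic.coeff_natDegree, mul_one]
  have hmonic : ((X - C u) ^ n * (X - C w) ^ n).Monic :=
    ((monic_X_sub_C u).pow n).mul ((monic_X_sub_C w).pow n)
  have hdeg : ((X - C u) ^ n * (X - C w) ^ n).natDegree = 2 * n := by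
    rw [natDegree_mul (pow_ne_zero _ (X_sub_C_ne_zero u)) (pow_ne_zero _ (X_sub_C_ne_zero w))]
    simp; ring
  have h2n := congrArg (coeff · (2 * n)) h
  simp only [coeff_add, coeff_one, coeff_C_mul, hleading _ hP, hleading _ hQ] at h2n
  rw [← hdeg, hmonic.coeff_natDegree, hdeg, if_neg (by omega)] at h2n
  linear_combination -h2n

theorem inv_eq_of_partialFraction {u w c z : K} {n : ℕ} {P Q : K[X]}
    (h : 1 = C c * ((X - C u) ^ n * (X - C w) ^ n)
        + P * (X * (X - C w) ^ n) + Q * (X * (X - C u) ^ n))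
    (hz : z ≠ 0) (hzu : z ≠ u) (hzw : z ≠ w) :
    (z * (z - u) ^ n * (z - w) ^ n)⁻¹ =
      c / z + Q.eval z / (z - w) ^ n + P.eval z / (z - u) ^ n := by
  have hzeval := congrArg (eval z) h
  simp only [eval_one, eval_add, eval_mul, eval_pow, eval_sub, eval_X, eval_C] at hzeval
  have hu := pow_ne_zero n (sub_ne_zero.2 hzu)
  have hw := pow_ne_zero n (sub_ne_zero.2 hzw)
  field_simp
  linear_combination hzeval

end Field

theorem re_coeff_pred_of_partialFraction {u : ℂ} (hconj : u ≠ conj u) {n : ℕ}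
    (hn : n ≠ 0) {P Q : ℂ[X]} (hP : P.degree < n) (hQ : Q.degree < n)
    (h : 1 = C ((u * conj u) ^ n)⁻¹ * ((X - C u) ^ n * (X - C (conj u)) ^ n)
        + P * (X * (X - C (conj u)) ^ n) + Q * (X * (X - C u) ^ n)) :
    (P.coeff (n - 1)).re = -((normSq u ^ n)⁻¹ / 2) := by
  have hc : ((u * conj u) ^ n)⁻¹ = ((normSq u ^ n)⁻¹ : ℝ) := by
    rw [mul_conj]; push_cast; rfl
  have hmap := congrArg (map (starRingEnd ℂ)) h
  simp only [Polynomial.map_add, Polynomial.map_mul, Polynomial.map_one, Polynomial.map_pow,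
    Polynomial.map_sub, map_X, map_C, conj_conj, hc, conj_ofReal] at hmap
  rw [hc] at h
  have hPQ : P = Q.map (starRingEnd ℂ) := by
    refine eq_of_mul_add_mul_eq_mul_add_mul (g₁ := (X - C u) ^ n) (g₂ := (X - C (conj u)) ^ n)
      (r₂ := Q) (s₂ := P.map (starRingEnd ℂ))
      (isCoprime_X_sub_C_of_isUnit_sub (sub_ne_zero.2 hconj).isUnit).pow
      (by simpa using hP) (by simpa using hQ) (mul_left_cancel₀ X_ne_zero ?_)
    linear_combination hmap - h
  have hsum := add_coeff_pred_add_coeff_pred_eq_zero hn hP hQ h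
  rw [hPQ, coeff_map] at hsum
  have := congrArg re hsum
  simp only [add_re, ofReal_re, conj_re, zero_re] at this
  rw [hPQ, coeff_map, conj_re]
  linarith

theorem taylor_coeff_of_natDegree_le {R : Type*} [CommSemiring R] {p : R[X]} {k : ℕ}
    (hp : p.natDegree ≤ k) (r : R) : (taylor r p).coeff k = p.coeff k := by
  have hD : hasseDeriv k p = C (p.coeff k) := by
    rw [eq_C_of_natDegree_le_zero ((natDegree_hasseDeriv_le p k).trans (by omega)),
      hasseDeriv_coeff]
    simp
  rw [taylor_coeff, hD, eval_C]

end Polynomial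

theorem circleIntegral_eval_div_sub_pow (p : ℂ[X]) {n : ℕ} (hp : p.natDegree < n) (c : ℂ)
    {R : ℝ} (hR : 0 < R) :
    (∮ z in C(c, R), p.eval z / (z - c) ^ n) = 2 * π * I * p.coeff (n - 1) := by
  set a : ℕ → ℂ := fun j => (taylor c p).coeff j
  have hexpand : Set.EqOn (fun z => p.eval z / (z - c) ^ n)
      (fun z => ∑ j ∈ Finset.range n, a j * (z - c) ^ ((j : ℤ) - n)) (sphere c R) := by
    intro z hz
    have hzc : z - c ≠ 0 := sub_ne_zero.2 (ne_of_mem_sphere hz hR.ne')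
    simp only [a, ← taylor_eval_sub c p z, eval_eq_sum_range' (p := taylor c p)
      (by rwa [natDegree_taylor]), Finset.sum_div, zpow_sub₀ hzc, zpow_natCast]
    refine Finset.sum_congr rfl fun j _ => ?_
    ring
  have hint (j : ℕ) : CircleIntegrable (fun z => a j * (z - c) ^ ((j : ℤ) - n)) c R :=
    (circleIntegrable_sub_zpow_iff.2 (Or.inr (Or.inr (by simp [abs_of_pos hR, hR.ne])))).const_smul
  rw [circleIntegral.integral_congr hR.le hexpand,
    circleIntegral.integral_fun_sum fun j _ => hint j,
    Finset.sum_eq_single_of_mem (n - 1) (Finset.mem_range.2 (by omega))]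
  · have hexp : ((n - 1 : ℕ) : ℤ) - n = -1 := by omega
    simp only [circleIntegral.integral_const_mul, hexp, zpow_neg_one]
    rw [circleIntegral.integral_sub_inv_of_mem_ball (mem_ball_self hR),
      show a (n - 1) = p.coeff (n - 1) from taylor_coeff_of_natDegree_le (by omega) c]
    ring
  · intro j hj hjn
    have hexp : (j : ℤ) - n ≠ -1 := by
      have := Finset.mem_range.1 hj
      omega
    rw [circleIntegral.integral_const_mul, circleIntegral.integral_sub_zpow_of_ne hexp, mul_zero]

theorem circleIntegral_add_eval_div_sub_pow {g : ℂ → ℂ} {c : ℂ} {R : ℝ} (hR : 0 < R)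
    (hg : DifferentiableOn ℂ g (closedBall c R)) (p : ℂ[X]) {n : ℕ} (hp : p.natDegree < n) :
    (∮ z in C(c, R), (g z + p.eval z / (z - c) ^ n)) = 2 * π * I * p.coeff (n - 1) := by
  have hcont : ContinuousOn (fun z => p.eval z / (z - c) ^ n) (sphere c R) :=
    p.continuous.continuousOn.div (by fun_prop) fun z hz =>
      pow_ne_zero _ (sub_ne_zero.2 (ne_of_mem_sphere hz hR.ne'))
  rw [circleIntegral.integral_add
      ((hg.continuousOn.mono sphere_subset_closedBall).circleIntegrable hR.le)
      (hcont.circleIntegrable hR.le),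
    (hg.diffContOnCl_ball le_rfl).circleIntegral_eq_zero hR.le, zero_add,
    circleIntegral_eval_div_sub_pow p hp c hR]

theorem circleIntegral_inv_mul_pow_mul_pow {u w c : ℂ} {n : ℕ} {P Q : ℂ[X]}
    (hP : P.natDegree < n)
    (h : 1 = C c * ((X - C u) ^ n * (X - C w) ^ n)
        + P * (X * (X - C w) ^ n) + Q * (X * (X - C u) ^ n))
    {R : ℝ} (hR : 0 < R) (h0 : 0 ∉ closedBall u R) (hw : w ∉ closedBall u R) :
    (∮ z in C(u, R), (z * (z - u) ^ n * (z - w) ^ n)⁻¹) = 2 * π * I * P.coeff (n - 1) := by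
  have hg : DifferentiableOn ℂ (fun z => c / z + Q.eval z / (z - w) ^ n) (closedBall u R) :=
    (differentiableOn_const c).div differentiableOn_id (fun z hz => ne_of_mem_of_not_mem hz h0)
      |>.add <| Q.differentiable.differentiableOn.div (by fun_prop)
        fun z hz => pow_ne_zero _ (sub_ne_zero.2 (ne_of_mem_of_not_mem hz hw))
  rw [← circleIntegral_add_eval_div_sub_pow hR hg P hP]
  refine circleIntegral.integral_congr hR.le fun z hz => ?_
  have hz' := sphere_subset_closedBall hz
  exact inv_eq_of_partialFraction h (ne_of_mem_of_not_mem hz' h0) (ne_of_mem_sphere hz hR.ne')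
    (ne_of_mem_of_not_mem hz' hw)

theorem im_pos_of_mem_closedBall {u z : ℂ} {ε : ℝ} (hε : ε < u.im) (hz : z ∈ closedBall u ε) :
    0 < z.im := by
  have h : |(z - u).im| ≤ ε := (abs_im_le_norm _).trans (mem_closedBall_iff_norm.1 hz)
  rw [sub_im] at h
  linarith [neg_abs_le (z.im - u.im)]

open Real in
theorem im_tau_eq_general (a0 : ℝ) (n : ℕ) (hn : 1 ≤ n)
    (u1 : ℂ) (hIm : 0 < u1.im)
    (v : ℂ → ℂ)
    (hv : ∀ z : ℂ, v z = (a0 : ℂ) * z * (z - u1) ^ n * (z - (starRingEnd ℂ) u1) ^ n)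
    (ε : ℝ) (hε : 0 < ε) (hε' : ε < u1.im)
    (τ : ℂ)
    (hτ : τ = -(2 * π * Complex.I)
        * ((2 * π * Complex.I)⁻¹ * (∮ z in C(u1, ε), (v z)⁻¹))) :
    τ.im = π / (a0 * ‖u1‖ ^ (2 * n)) := by
  have hu0 : u1 ≠ 0 := by rintro rfl; simp at hIm
  have hconj : u1 ≠ conj u1 := fun h => by
    linarith [show u1.im = -u1.im by rw [← conj_im, ← h]]
  obtain ⟨P, Q, hP, hQ, hid⟩ :=
    exists_partialFraction_X_mul_pow_mul_pow hu0 ((_root_.map_ne_zero _).2 hu0) hconj n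
  have hre := re_coeff_pred_of_partialFraction hconj (by omega) hP hQ hid
  have hout {z : ℂ} (hz : z.im ≤ 0) : z ∉ closedBall u1 ε := fun hmem =>
    (im_pos_of_mem_closedBall hε' hmem).not_ge hz
  have hI : (∮ z in C(u1, ε), (v z)⁻¹) = (a0 : ℂ)⁻¹ * (2 * π * I * P.coeff (n - 1)) := by
    have hv' (z : ℂ) : (v z)⁻¹ = (a0 : ℂ)⁻¹ * (z * (z - u1) ^ n * (z - conj u1) ^ n)⁻¹ := by
      rw [hv]; ring
    simp only [hv', circleIntegral.integral_const_mul]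
    rw [circleIntegral_inv_mul_pow_mul_pow (by have := natDegree_le_pred_of_degree_lt hP; omega)
      hid hε (hout (by simp)) (hout (by simp; linarith))]
  have h2πI : (2 * π * I : ℂ) ≠ 0 := by simp [pi_ne_zero]
  have him : ((a0 : ℂ)⁻¹ * (2 * π * I * P.coeff (n - 1))).im =
      a0⁻¹ * (2 * π * (P.coeff (n - 1)).re) := by
    rw [← ofReal_inv, im_ofReal_mul]
    simp
  rw [normSq_eq_norm_sq, ← pow_mul] at hre
  rw [hτ, hI, ← mul_assoc, neg_mul, mul_inv_cancel₀ h2πI, neg_one_mul, neg_im, him, hre,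
    div_eq_mul_inv π, mul_inv]
  ring

open Real in
theorem im_tau_eq (a0 : ℝ) (ha0 : 0 < a0) (n : ℕ) (hn : 1 ≤ n)
    (u1 : ℂ) (hIm : 0 < u1.im)
    (v : ℂ → ℂ)
    (hv : ∀ z : ℂ, v z = (a0 : ℂ) * z * (z - u1) ^ n * (z - (starRingEnd ℂ) u1) ^ n)
    (ε : ℝ) (hε : 0 < ε) (hε' : ε < u1.im)
    (τ : ℂ)
    (hτ : τ = -(2 * π * Complex.I)
        * ((2 * π * Complex.I)⁻¹ * (∮ z in C(u1, ε), (v z)⁻¹))) :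
    τ.im = π / (a0 * ‖u1‖ ^ (2 * n)) :=
  im_tau_eq_general a0 n hn u1 hIm v hv ε hε hε' τ hτ
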